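/- Suppose α is irrational and f ∈ L²(T²) depends only on p (i.e., f ∈ H₂, the closed span of {e_{0,s}}) and satisfies Uf = λf with |λ| = 1 for the Koopman operator U of the triangle map. Then f is constant almost everywhere and λ = 1. -/

import Mathlib

/-!
Write `f(q, p) = g(p)`. On the two positive-measure sets where `θ(q) = 1` and `θ(q) = -1` the
eigen-equation reads `g(p + β ± α) = λ g(p)`, so `g(p + β + α) = g(p + β - α)` for a.e. `p`:
`g` is invariant under the irrational rotation by `2α`, hence a.e. a constant `z`, by
ergodicity. Then `z = λ z`, and `z ≠ 0` because `f` is not a.e. zero, so `λ = 1`.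
-/

open MeasureTheory Finset

/-- The step function `θ` on the circle: `1` on `[0,1/2)`, `-1` on `[1/2,1)`. -/
noncomputable def triTheta (q : AddCircle (1:ℝ)) : ℝ :=
  if ((AddCircle.equivIco 1 0 q : ℝ)) < 1/2 then 1 else -1

/-- The triangle map `φ(q,p) = (q+p+αθ(q)+β, p+αθ(q)+β)` on the torus. -/
noncomputable def triMap (α β : ℝ) :
    AddCircle (1:ℝ) × AddCircle (1:ℝ) → AddCircle (1:ℝ) × AddCircle (1:ℝ) :=
  fun x => (x.1 + x.2 + ((α * triTheta x.1 + β : ℝ) : AddCircle (1:ℝ)),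
            x.2 + ((α * triTheta x.1 + β : ℝ) : AddCircle (1:ℝ)))

namespace AddCircle

variable {T : ℝ} [Fact (0 < T)]

theorem addOrderOf_coe_eq_zero_of_irrational {x : ℝ} (hx : Irrational (x / T)) :
    addOrderOf (x : AddCircle T) = 0 :=
  denseRange_zsmul_iff.1 (denseRange_zsmul_coe_iff.2 hx)

theorem ae_eq_const_of_ae_add_eq_add {E : Type*} [TopologicalSpace E]
    [TopologicalSpace.MetrizableSpace E] [Nonempty E] {g : AddCircle T → E}
    (hg : AEStronglyMeasurable g volume) {d₁ d₂ : AddCircle T} (hd : addOrderOf (d₁ - d₂) = 0)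
    (h : ∀ᵐ y, g (y + d₁) = g (y + d₂)) : ∃ z, g =ᵐ[volume] Function.const _ z := by
  refine (ergodic_add_left.2 hd).ae_eq_const_of_ae_eq_comp_ae hg ?_
  filter_upwards [(measurePreserving_add_right volume (-d₂)).quasiMeasurePreserving.ae h]
    with y hy
  change g (d₁ - d₂ + y) = g y
  convert hy using 2 <;> abel

theorem volume_ne_zero_of_subset_coe_preimage {t : ℝ} {s : Set ℝ}
    (hs : s ⊆ Set.Ioc t (t + T)) (hs₀ : volume s ≠ 0) {S : Set (AddCircle T)}
    (hsS : s ⊆ (↑) ⁻¹' S) : volume S ≠ 0 := by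
  intro hS
  have hnull := (AddCircle.measurePreserving_mk T t).quasiMeasurePreserving.preimage_null hS
  rw [Measure.restrict_apply' measurableSet_Ioc] at hnull
  exact hs₀ (measure_mono_null (Set.subset_inter hsS hs) hnull)

end AddCircle

theorem triTheta_coe_of_mem_Ico {x : ℝ} (hx : x ∈ Set.Ico 0 1) :
    triTheta x = if x < 1 / 2 then 1 else -1 := by
  rw [triTheta, AddCircle.equivIco_coe_eq (by simpa using hx)]

theorem volume_setOf_triTheta_eq_one_ne_zero : volume {q | triTheta q = 1} ≠ 0 := by
  refine AddCircle.volume_ne_zero_of_subset_coe_preimage (t := 0) (s := Set.Ioo 0 (1 / 2))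
    (fun x hx => ⟨hx.1, by linarith [hx.2]⟩) (by norm_num) fun x hx => ?_
  rw [Set.mem_preimage, Set.mem_ofPred_eq,
    triTheta_coe_of_mem_Ico ⟨hx.1.le, by linarith [hx.2]⟩, if_pos hx.2]

theorem volume_setOf_triTheta_eq_neg_one_ne_zero : volume {q | triTheta q = -1} ≠ 0 := by
  refine AddCircle.volume_ne_zero_of_subset_coe_preimage (t := 0) (s := Set.Ioo (1 / 2) 1)
    (fun x hx => ⟨by linarith [hx.1], by linarith [hx.2]⟩) (by norm_num) fun x hx => ?_
  rw [Set.mem_preimage, Set.mem_ofPred_eq, triTheta_coe_of_mem_Ico ⟨by linarith [hx.1], hx.2⟩,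
    if_neg hx.1.not_gt]

theorem ae_add_eq_mul_of_ae_triMap_snd {M : Type*} [Mul M] {α β : ℝ}
    {g : AddCircle (1:ℝ) → M} {c : M} (heig : ∀ᵐ x ∂volume, g (triMap α β x).2 = c * g x.2)
    {t : ℝ} (ht : volume {q | triTheta q = t} ≠ 0) :
    ∀ᵐ p ∂volume, g (p + ((α * t + β : ℝ) : AddCircle (1:ℝ))) = c * g p := by
  obtain ⟨q, hq, hqp⟩ := Measure.exists_mem_of_measure_ne_zero_of_ae ht
    (ae_restrict_of_ae (Measure.ae_ae_of_ae_prod heig))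
  simpa only [triMap, show triTheta q = t from hq] using hqp

theorem triMap_eigenfunction_in_H2_constant_general (α β : ℝ) (hα : Irrational α)
    (f : AddCircle (1:ℝ) × AddCircle (1:ℝ) → ℂ) (c : ℂ)
    (hf : MemLp f 2 (volume : Measure (AddCircle (1:ℝ) × AddCircle (1:ℝ))))
    (hdep : ∀ q q' p : AddCircle (1:ℝ), f (q, p) = f (q', p))
    (heig : ∀ᵐ x ∂(volume : Measure (AddCircle (1:ℝ) × AddCircle (1:ℝ))),
      f (triMap α β x) = c * f x)
    (hne : ¬ f =ᵐ[(volume : Measure (AddCircle (1:ℝ) × AddCircle (1:ℝ)))]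
      (fun _ => (0:ℂ))) :
    (∃ z : ℂ, f =ᵐ[(volume : Measure (AddCircle (1:ℝ) × AddCircle (1:ℝ)))]
      (fun _ => z)) ∧ c = 1 := by
  obtain ⟨q₀, hg⟩ := hf.aestronglyMeasurable.prodMk_left.exists
  set g : AddCircle (1:ℝ) → ℂ := fun p => f (q₀, p)
  have hfg : ∀ x, f x = g x.2 := fun x => hdep x.1 q₀ x.2
  simp only [hfg] at heig
  set d : ℝ → AddCircle (1:ℝ) := fun t => ((α * t + β : ℝ) : AddCircle (1:ℝ))
  have h₁ : ∀ᵐ p, g (p + d 1) = c * g p :=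
    ae_add_eq_mul_of_ae_triMap_snd heig volume_setOf_triTheta_eq_one_ne_zero
  have h₂ : ∀ᵐ p, g (p + d (-1)) = c * g p :=
    ae_add_eq_mul_of_ae_triMap_snd heig volume_setOf_triTheta_eq_neg_one_ne_zero
  have hd : addOrderOf (d 1 - d (-1)) = 0 := by
    refine AddCircle.addOrderOf_coe_eq_zero_of_irrational ?_
    simpa [d, two_mul] using hα.natCast_mul two_ne_zero
  obtain ⟨z, hz⟩ := AddCircle.ae_eq_const_of_ae_add_eq_add hg hd <| by
    filter_upwards [h₁, h₂] with p e₁ e₂ using e₁.trans e₂.symm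
  have hfz : f =ᵐ[volume] fun _ => z := by
    filter_upwards [(Measure.quasiMeasurePreserving_snd (μ := volume)).ae hz] with x hx
    rw [hfg, hx, Function.const_apply]
  have hz₀ : z ≠ 0 := by
    rintro rfl
    exact hne hfz
  have hz_shift := (measurePreserving_add_right volume (d 1)).quasiMeasurePreserving.ae hz
  obtain ⟨p, hp₁, hp, hp_shift⟩ := (h₁.and (hz.and hz_shift)).exists
  have hzc : z = c * z := by simpa only [hp, hp_shift, Function.const_apply] using hp₁
  exact ⟨⟨z, hfz⟩, mul_right_cancel₀ hz₀ (by rw [one_mul, ← hzc])⟩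

/-- For irrational `α`, an `L²` Koopman eigenfunction of the triangle map with
unimodular eigenvalue that depends only on the second coordinate `p` must be
a.e. constant, with eigenvalue `1`. -/
theorem triMap_eigenfunction_in_H2_constant (α β : ℝ) (hα : Irrational α)
    (f : AddCircle (1:ℝ) × AddCircle (1:ℝ) → ℂ) (c : ℂ)
    (hf : MemLp f 2 (volume : Measure (AddCircle (1:ℝ) × AddCircle (1:ℝ))))
    (hdep : ∀ q q' p : AddCircle (1:ℝ), f (q, p) = f (q', p))
    (hc : ‖c‖ = 1)
    (heig : ∀ᵐ x ∂(volume : Measure (AddCircle (1:ℝ) × AddCircle (1:ℝ))),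
      f (triMap α β x) = c * f x)
    (hne : ¬ f =ᵐ[(volume : Measure (AddCircle (1:ℝ) × AddCircle (1:ℝ)))]
      (fun _ => (0:ℂ))) :
    (∃ z : ℂ, f =ᵐ[(volume : Measure (AddCircle (1:ℝ) × AddCircle (1:ℝ)))]
      (fun _ => z)) ∧ c = 1 :=
  triMap_eigenfunction_in_H2_constant_general α β hα f c hf hdep heig hne
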